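/- Let n be an odd prime, M = circ(m₀,...,m_{n−1}) with m_j = (1/√n)·e^{(2πi/n)·j²}, and for 0 < s < n write M^s = circ(x₀,...,x_{n−1}). Then |x₀|² ≤ 1/n, and M^n = circ(y₀,0,...,0) with |y₀|² = 1. -/

import Mathlib

/-!
Write `ψ = ZMod.stdAddChar` and `G a` for the circulant matrix with first row `t ↦ ψ (a t²)`, so
that `M = n^(-1/2) • G 1`. Completing the square in the convolution gives
`G a * G b = (∑ⱼ ψ ((a + b) j²)) • G (a b / (a + b))`, so `M^s` is a multiple `c • G (1/s)` for
`0 < s < n`. When `a + b = 0` the convolution is instead a linear character sum, and for odd `n`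
it gives `G a * G (-a) = n • 1`. Hence `M` is unitary, so the first row of `M^s = c • G (1/s)`,
all of whose entries have modulus `|c|`, has `n |c|² = 1`; and `M^n = M^(n-1) M` is a multiple
of `G (-1) * G 1 = n • 1`.
-/

open Complex Real Matrix

/-- The circulant (shift) matrix whose `(i,j)` entry is `a (j - i)`. -/
def circ {n : ℕ} (a : ZMod n → ℂ) : Matrix (ZMod n) (ZMod n) ℂ :=
  fun i j => a (j - i)

/-- The circulant Gauss matrix `M_n` with `m_j = (1/√n)·e^{(2πi/n)·j²}`. -/
noncomputable def gaussMatrix (n : ℕ) : Matrix (ZMod n) (ZMod n) ℂ :=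
  circ (fun j => (1 / Real.sqrt n : ℂ) *
    Complex.exp (2 * Real.pi * Complex.I * ((j.val : ℂ) ^ 2) / n))

open Finset ZMod

variable {n : ℕ}

lemma circ_mul [NeZero n] (a b : ZMod n → ℂ) :
    circ a * circ b = circ fun t => ∑ j, a j * b (t - j) := by
  ext i k
  simp only [mul_apply, circ]
  exact Fintype.sum_equiv (Equiv.subRight i) _ _ fun j => by simp [sub_sub_sub_cancel_right]

lemma circ_conjTranspose (a : ZMod n → ℂ) : (circ a)ᴴ = circ fun t => star (a (-t)) := by
  ext i j
  simp [circ]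

lemma smul_circ (c : ℂ) (a : ZMod n → ℂ) : c • circ a = circ (c • a) := rfl

lemma circ_ite_zero_eq_smul_one (y : ℂ) : circ (fun t : ZMod n => if t = 0 then y else 0) = y • 1 := by
  ext i j
  simp [circ, one_apply, sub_eq_zero, eq_comm]

lemma isUnit_two_of_odd (hodd : Odd n) : IsUnit (2 : ZMod n) := by
  exact_mod_cast (isUnit_iff_coprime 2 n).mpr (Nat.coprime_two_left.mpr hodd)

lemma natCast_ne_zero_of_pos_of_lt {k : ℕ} (hk : 0 < k) (hkn : k < n) : (k : ZMod n) ≠ 0 :=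
  (natCast_eq_zero_iff k n).not.mpr (Nat.not_dvd_of_pos_of_lt hk hkn)

lemma ofReal_sqrt_natCast_sq (n : ℕ) : (√n : ℂ) ^ 2 = n := by
  norm_cast
  exact Real.sq_sqrt n.cast_nonneg

section Gauss

variable [NeZero n]

noncomputable def gaussCirc (a : ZMod n) : Matrix (ZMod n) (ZMod n) ℂ :=
  circ fun t => stdAddChar (a * t ^ 2)

lemma gaussCirc_apply_self (a : ZMod n) (i : ZMod n) : gaussCirc a i i = 1 := by
  simp [gaussCirc, circ]

lemma gaussMatrix_eq_smul_gaussCirc : gaussMatrix n = (1 / √n : ℂ) • gaussCirc 1 := by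
  ext i j
  have hψ (k : ZMod n) : stdAddChar (k ^ 2) =
      Complex.exp (2 * Real.pi * Complex.I * ((k.val : ℂ) ^ 2) / n) := by
    conv_lhs => rw [← natCast_zmod_val k, ← Nat.cast_pow, stdAddChar_apply, toCircle_natCast]
    push_cast
    rfl
  simp [gaussMatrix, gaussCirc, circ, hψ]

lemma gaussCirc_conjTranspose (a : ZMod n) : (gaussCirc a)ᴴ = gaussCirc (-a) := by
  simp [gaussCirc, circ_conjTranspose, ← AddChar.map_neg_eq_conj]

lemma gaussCirc_mul_gaussCirc {a b u : ZMod n} (hu : (a + b) * u = 1) :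
    gaussCirc a * gaussCirc b = (∑ j, stdAddChar ((a + b) * j ^ 2)) • gaussCirc (a * b * u) := by
  rw [gaussCirc, gaussCirc, circ_mul, gaussCirc, smul_circ]
  congr 1
  funext t
  have complete_square : ∀ j, a * j ^ 2 + b * (t - j) ^ 2
      = (a + b) * (j - b * u * t) ^ 2 + a * b * u * t ^ 2 := fun j => by
    linear_combination (2 * b * j * t - b * t ^ 2 * (1 + b * u)) * hu
  calc ∑ j, stdAddChar (a * j ^ 2) * stdAddChar (b * (t - j) ^ 2)
      = ∑ j, stdAddChar ((a + b) * (j - b * u * t) ^ 2) * stdAddChar (a * b * u * t ^ 2) := by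
        simp only [← AddChar.map_add_eq_mul, complete_square]
    _ = (∑ j, stdAddChar ((a + b) * j ^ 2)) * stdAddChar (a * b * u * t ^ 2) := by
        rw [← sum_mul]
        congr 1
        exact Fintype.sum_equiv (Equiv.subRight (b * u * t)) _ _ fun j => rfl

lemma gaussCirc_mul_gaussCirc_neg (h2 : IsUnit (2 : ZMod n)) {a : ZMod n} (ha : IsUnit a) :
    gaussCirc a * gaussCirc (-a) = (n : ℂ) • 1 := by
  rw [gaussCirc, gaussCirc, circ_mul, ← circ_ite_zero_eq_smul_one]
  congr 1
  funext t
  have h : ∀ j, a * j ^ 2 + -a * (t - j) ^ 2 = j * (2 * a * t) + -a * t ^ 2 := fun j => by ring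
  simp_rw [← AddChar.map_add_eq_mul, h, AddChar.map_add_eq_mul, ← sum_mul,
    AddChar.sum_mulShift _ (isPrimitive_stdAddChar n), (h2.mul ha).mul_right_eq_zero]
  split_ifs with ht <;> simp [ht]

theorem gaussMatrix_mem_unitaryGroup (hodd : Odd n) :
    gaussMatrix n ∈ unitaryGroup (ZMod n) ℂ := by
  have hn : (n : ℂ) ≠ 0 := Nat.cast_ne_zero.mpr (NeZero.ne n)
  have hscalar : (1 / √n : ℂ) * star (1 / √n : ℂ) * n = 1 := by
    rw [Complex.star_def, map_div₀, map_one, conj_ofReal, ← sq, div_pow,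
      ofReal_sqrt_natCast_sq]
    field_simp
  rw [mem_unitaryGroup_iff, star_eq_conjTranspose, gaussMatrix_eq_smul_gaussCirc,
    conjTranspose_smul, gaussCirc_conjTranspose, smul_mul_smul_comm,
    gaussCirc_mul_gaussCirc_neg (isUnit_two_of_odd hodd) isUnit_one, smul_smul, hscalar,
    one_smul]

lemma norm_sq_eq_one_div_of_smul_gaussCirc_mem_unitaryGroup {c : ℂ} {a : ZMod n}
    (h : c • gaussCirc a ∈ unitaryGroup (ZMod n) ℂ) : ‖c‖ ^ 2 = 1 / n := by
  have h00 := congr_fun₂ (mem_unitaryGroup_iff.mp h) 0 0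
  simp only [mul_apply, star_apply, ← starRingEnd_apply, RCLike.mul_conj, Matrix.smul_apply,
    norm_smul, gaussCirc, circ, AddChar.norm_apply, mul_one, sum_const, card_univ, ZMod.card,
    nsmul_eq_mul, one_apply_eq] at h00
  have hn : (n : ℝ) ≠ 0 := Nat.cast_ne_zero.mpr (NeZero.ne n)
  have hrow : (n : ℝ) * ‖c‖ ^ 2 = 1 := by
    apply ofReal_injective
    push_cast
    exact h00
  field_simp
  linarith

end Gauss

lemma exists_gaussMatrix_pow_eq_smul_gaussCirc {p : ℕ} [Fact p.Prime] {s : ℕ} (hs : 0 < s)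
    (hsp : s < p) : ∃ c : ℂ, gaussMatrix p ^ s = c • gaussCirc (s : ZMod p)⁻¹ := by
  induction s, hs using Nat.le_induction with
  | base => exact ⟨_, by rw [pow_one, gaussMatrix_eq_smul_gaussCirc, Nat.cast_one, inv_one]⟩
  | succ s hs ih =>
    obtain ⟨c, hc⟩ := ih (by omega)
    have hs0 : (s : ZMod p) ≠ 0 := natCast_ne_zero_of_pos_of_lt (by omega) (by omega)
    have hs1 : (s : ZMod p) + 1 ≠ 0 := by
      exact_mod_cast natCast_ne_zero_of_pos_of_lt (n := p) (k := s + 1) (by omega) hsp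
    have hu : ((s : ZMod p)⁻¹ + 1) * ((s : ZMod p) * ((s : ZMod p) + 1)⁻¹) = 1 := by
      field_simp
      ring
    refine ⟨c * (1 / √p) * ∑ j, stdAddChar (((s : ZMod p)⁻¹ + 1) * j ^ 2), ?_⟩
    rw [pow_succ, hc, gaussMatrix_eq_smul_gaussCirc, smul_mul_smul_comm,
      gaussCirc_mul_gaussCirc hu, smul_smul]
    congr 2
    push_cast
    field_simp

lemma gaussMatrix_pow_self {p : ℕ} [Fact p.Prime] (hodd : Odd p) :
    ∃ y : ℂ, ‖y‖ ^ 2 = 1 ∧ gaussMatrix p ^ p = y • 1 := by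
  have hp1 : 1 < p := (Fact.out : p.Prime).one_lt
  obtain ⟨c, hc⟩ :=
    exists_gaussMatrix_pow_eq_smul_gaussCirc (p := p) (s := p - 1) (by omega) (by omega)
  have hc_norm := norm_sq_eq_one_div_of_smul_gaussCirc_mem_unitaryGroup
    (hc ▸ pow_mem (gaussMatrix_mem_unitaryGroup hodd) (p - 1))
  have hinv : ((p - 1 : ℕ) : ZMod p)⁻¹ = -1 := by
    rw [Nat.cast_sub hp1.le, natCast_self, Nat.cast_one, zero_sub, inv_neg, inv_one]
  have hpow : gaussMatrix p ^ p = gaussMatrix p ^ (p - 1) * gaussMatrix p := by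
    rw [← pow_succ, Nat.sub_add_cancel hp1.le]
  have hmul := gaussCirc_mul_gaussCirc_neg (isUnit_two_of_odd hodd) isUnit_one.neg
  rw [neg_neg] at hmul
  refine ⟨c * √p, ?_, ?_⟩
  · rw [norm_mul, mul_pow, hc_norm, norm_real, Real.norm_eq_abs, sq_abs,
      Real.sq_sqrt p.cast_nonneg]
    field_simp
  · rw [hpow, hc, hinv, gaussMatrix_eq_smul_gaussCirc, smul_mul_smul_comm, hmul, smul_smul]
    congr 1
    rw [← ofReal_sqrt_natCast_sq]
    field_simp

theorem gaussMatrix_pow_diag (n : ℕ) [NeZero n] (hp : n.Prime) (hodd : Odd n) :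
    (∀ s : ℕ, 0 < s → s < n →
      ‖((gaussMatrix n) ^ s) 0 0‖ ^ 2 ≤ 1 / n) ∧
    (∃ y₀ : ℂ, ‖y₀‖ ^ 2 = 1 ∧
      (gaussMatrix n) ^ n = circ (fun t => if t = 0 then y₀ else 0)) := by
  have : Fact n.Prime := ⟨hp⟩
  refine ⟨fun s hs hsn => ?_, ?_⟩
  · obtain ⟨c, hc⟩ := exists_gaussMatrix_pow_eq_smul_gaussCirc hs hsn
    have hc_norm := norm_sq_eq_one_div_of_smul_gaussCirc_mem_unitaryGroup
      (hc ▸ pow_mem (gaussMatrix_mem_unitaryGroup hodd) s)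
    rw [hc, Matrix.smul_apply, gaussCirc_apply_self, smul_eq_mul, mul_one, hc_norm]
  · obtain ⟨y, hy, hpow⟩ := gaussMatrix_pow_self hodd
    exact ⟨y, hy, by rw [hpow, circ_ite_zero_eq_smul_one]⟩
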